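/- arXiv:1902.08655 — 6 statements merged into one kernel-verified Lean document; each statement's English description precedes it below -/
import Mathlib

section
/- Let T be a bounded operator on a Hilbert space H with orthonormal basis (e_χ)_{χ∈X₊}, and let λ : X₊ → ℂ be a map with λ(χ) ≠ 0 for all χ in some subset S ⊆ X₊ such that S_χ* T S_χ = λ(χ) T for all χ ∈ S, where each S_χ is a Fredholm isometry. If T − μ·I is Fredholm for some μ ∈ ℂ, then for every χ ∈ S the operator T − λ(χ)⁻¹ μ · I is Fredholm and ind(T − μ) = ind(T − λ(χ)⁻¹μ). -/
/-
For the isometry `s = S_χ` we have `s* s = 1`, so `s* T s = λ(χ) T` gives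
`s* (T - μ) s = λ(χ) (T - λ(χ)⁻¹ μ)`. The index is additive under composition, and `s*` is
surjective with kernel `(range s)ᗮ ≅ H ⧸ range s`, so `ind s* = -ind s`: conjugation by `s`
preserves Fredholmness and the index, and the nonzero scalar `λ(χ)` changes neither kernel nor
range. Closedness of the range needs no separate argument: a bounded operator between Banach
spaces with finite-codimensional range has closed range.
-/

open scoped InnerProductSpace

/-- An operator is Fredholm if it has closed range, finite-dimensional kernel
and finite-dimensional cokernel. -/
def IsFredholm {H : Type*} [NormedAddCommGroup H] [InnerProductSpace ℂ H]
    [CompleteSpace H] (T : H →L[ℂ] H) : Prop :=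
  IsClosed (LinearMap.range (T : H →ₗ[ℂ] H) : Set H) ∧
    FiniteDimensional ℂ (LinearMap.ker (T : H →ₗ[ℂ] H)) ∧
    FiniteDimensional ℂ (H ⧸ LinearMap.range (T : H →ₗ[ℂ] H))

/-- The Fredholm index. -/
noncomputable def fredholmInd {H : Type*} [NormedAddCommGroup H]
    [InnerProductSpace ℂ H] [CompleteSpace H] (T : H →L[ℂ] H) : ℤ :=
  (Module.finrank ℂ (LinearMap.ker (T : H →ₗ[ℂ] H)) : ℤ) -
    (Module.finrank ℂ (H ⧸ LinearMap.range (T : H →ₗ[ℂ] H)) : ℤ)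

namespace LinearMap

variable {k U V W : Type*} [Field k] [AddCommGroup U] [Module k U] [AddCommGroup V] [Module k V]
  [AddCommGroup W] [Module k W] (f : U →ₗ[k] V) (g : V →ₗ[k] W)

theorem finiteDimensional_ker_comp [FiniteDimensional k f.ker] [FiniteDimensional k g.ker] :
    FiniteDimensional k (g ∘ₗ f).ker := by
  rw [ker_comp]
  infer_instance

theorem finiteDimensional_quotient_range_comp [FiniteDimensional k (V ⧸ f.range)]
    [FiniteDimensional k g.ker] [FiniteDimensional k (W ⧸ g.range)] :
    FiniteDimensional k (W ⧸ (g ∘ₗ f).range) := by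
  rw [range_comp]
  infer_instance

end LinearMap

theorem mul_sub_smul_one_mul_eq_smul {𝕜 R : Type*} [Field 𝕜] [Ring R] [Algebra 𝕜 R]
    {u s T : R} {c : 𝕜} (hc : c ≠ 0) (hus : u * s = 1) (huTs : u * T * s = c • T) (μ : 𝕜) :
    u * (T - μ • 1) * s = c • (T - (c⁻¹ * μ) • 1) := by
  rw [mul_sub, sub_mul, huTs, mul_smul_comm, mul_one, smul_mul_assoc, hus, smul_sub, smul_smul,
    mul_inv_cancel_left₀ hc]

namespace ContinuousLinearMap

theorem isClosed_range_of_norm_map {𝕜 E F : Type*} [NormedField 𝕜] [NormedAddCommGroup E]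
    [NormedSpace 𝕜 E] [CompleteSpace E] [NormedAddCommGroup F] [NormedSpace 𝕜 F]
    (s : E →L[𝕜] F) (hs : ∀ x, ‖s x‖ = ‖x‖) : IsClosed ((s : E →ₗ[𝕜] F).range : Set F) := by
  simpa only [LinearMap.coe_range, ContinuousLinearMap.coe_coe] using
    (AddMonoidHomClass.isometry_of_norm s hs).isClosedEmbedding.isClosed_range

section Banach

variable {𝕜 E F : Type*} [NontriviallyNormedField 𝕜] [CompleteSpace 𝕜] [NormedAddCommGroup E]
  [NormedSpace 𝕜 E] [CompleteSpace E] [NormedAddCommGroup F] [NormedSpace 𝕜 F] [CompleteSpace F]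

/-- Passing to `E ⧸ ker f`, again a Banach space, reduces this to the injective case. -/
theorem isClosed_range_of_finiteDimensional_quotient (f : E →L[𝕜] F)
    [FiniteDimensional 𝕜 (F ⧸ (f : E →ₗ[𝕜] F).range)] :
    IsClosed ((f : E →ₗ[𝕜] F).range : Set F) := by
  have : IsClosed ((f : E →ₗ[𝕜] F).ker : Set E) := f.isClosed_ker
  let g := (f : E →ₗ[𝕜] F).ker.liftQL f le_rfl
  have hg_ker : (g : E ⧸ (f : E →ₗ[𝕜] F).ker →ₗ[𝕜] F).ker = ⊥ :=
    Submodule.ker_liftQ_eq_bot _ _ _ le_rfl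
  have hg_range : (g : E ⧸ (f : E →ₗ[𝕜] F).ker →ₗ[𝕜] F).range = (f : E →ₗ[𝕜] F).range :=
    Submodule.range_liftQ _ _ _
  obtain ⟨G, hG⟩ := (f : E →ₗ[𝕜] F).range.exists_isCompl
  have : FiniteDimensional 𝕜 G := (Submodule.quotientEquivOfIsCompl _ G hG).finiteDimensional
  rw [← hg_range] at hG ⊢
  exact g.closed_complemented_range_of_isCompl_of_ker_eq_bot G hG
    G.closed_of_finiteDimensional hg_ker

end Banach

section Hilbert

variable {𝕜 E F : Type*} [RCLike 𝕜] [NormedAddCommGroup E] [InnerProductSpace 𝕜 E]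
  [CompleteSpace E] [NormedAddCommGroup F] [InnerProductSpace 𝕜 F] [CompleteSpace F]

noncomputable def quotientRangeEquivKerAdjoint (T : E →L[𝕜] F)
    (hT : IsClosed ((T : E →ₗ[𝕜] F).range : Set F)) :
    (F ⧸ (T : E →ₗ[𝕜] F).range) ≃ₗ[𝕜] (adjoint T : F →ₗ[𝕜] E).ker :=
  haveI : CompleteSpace (T : E →ₗ[𝕜] F).range := hT.completeSpace_coe
  (Submodule.quotientEquivOfIsCompl _ _ (Submodule.isCompl_orthogonal _)).trans
    (LinearEquiv.ofEq _ _ (orthogonal_range T))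

theorem surjective_adjoint_of_norm_map (s : E →L[𝕜] F) (hs : ∀ x, ‖s x‖ = ‖x‖) :
    Function.Surjective (adjoint s) := fun x =>
  ⟨s x, by rw [← comp_apply, (norm_map_iff_adjoint_comp_self s).1 hs]; rfl⟩

theorem index_adjoint_of_norm_map (s : E →L[𝕜] F) (hs : ∀ x, ‖s x‖ = ‖x‖) :
    (adjoint s : F →ₗ[𝕜] E).index = -(s : E →ₗ[𝕜] F).index := by
  rw [LinearMap.index_of_surjective (surjective_adjoint_of_norm_map s hs),
    LinearMap.index_of_injective (AddMonoidHomClass.isometry_of_norm s hs).injective, neg_neg,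
    (quotientRangeEquivKerAdjoint s (isClosed_range_of_norm_map s hs)).finrank_eq]

end Hilbert

end ContinuousLinearMap

section Fredholm

open ContinuousLinearMap (adjoint isClosed_range_of_norm_map quotientRangeEquivKerAdjoint
  surjective_adjoint_of_norm_map index_adjoint_of_norm_map)

variable {H : Type*} [NormedAddCommGroup H] [InnerProductSpace ℂ H] [CompleteSpace H]

theorem fredholmInd_eq_index (T : H →L[ℂ] H) : fredholmInd T = (T : H →ₗ[ℂ] H).index := rfl

theorem isFredholm_of_finiteDimensional {T : H →L[ℂ] H}
    (hker : FiniteDimensional ℂ (T : H →ₗ[ℂ] H).ker)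
    (hcoker : FiniteDimensional ℂ (H ⧸ (T : H →ₗ[ℂ] H).range)) : IsFredholm T :=
  ⟨T.isClosed_range_of_finiteDimensional_quotient, hker, hcoker⟩

theorem isFredholm_smul_iff {T : H →L[ℂ] H} {c : ℂ} (hc : c ≠ 0) :
    IsFredholm (c • T) ↔ IsFredholm T := by
  rw [IsFredholm, IsFredholm, ContinuousLinearMap.toLinearMap_smul, LinearMap.ker_smul _ _ hc,
    LinearMap.range_smul _ _ hc]

theorem fredholmInd_smul {T : H →L[ℂ] H} {c : ℂ} (hc : c ≠ 0) :
    fredholmInd (c • T) = fredholmInd T := by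
  rw [fredholmInd_eq_index, fredholmInd_eq_index, ContinuousLinearMap.toLinearMap_smul,
    LinearMap.index_smul _ hc]

theorem IsFredholm.adjoint_comp_comp_of_norm_map {s : H →L[ℂ] H} (hs : ∀ x, ‖s x‖ = ‖x‖)
    (hs_coker : FiniteDimensional ℂ (H ⧸ (s : H →ₗ[ℂ] H).range)) {A : H →L[ℂ] H}
    (hA : IsFredholm A) :
    IsFredholm (adjoint s ∘L A ∘L s) ∧ fredholmInd (adjoint s ∘L A ∘L s) = fredholmInd A := by
  obtain ⟨-, hA_ker, hA_coker⟩ := hA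
  have : FiniteDimensional ℂ (s : H →ₗ[ℂ] H).ker := by
    rw [LinearMap.ker_eq_bot.2 (AddMonoidHomClass.isometry_of_norm s hs).injective]
    infer_instance
  have : FiniteDimensional ℂ (adjoint s : H →ₗ[ℂ] H).ker :=
    (quotientRangeEquivKerAdjoint s (isClosed_range_of_norm_map s hs)).finiteDimensional
  have : FiniteDimensional ℂ (H ⧸ (adjoint s : H →ₗ[ℂ] H).range) := by
    rw [LinearMap.range_eq_top.2 (surjective_adjoint_of_norm_map s hs)]
    infer_instance
  have hcomp : ((adjoint s ∘L A ∘L s : H →L[ℂ] H) : H →ₗ[ℂ] H) =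
      (adjoint s : H →ₗ[ℂ] H) ∘ₗ (A : H →ₗ[ℂ] H) ∘ₗ (s : H →ₗ[ℂ] H) := rfl
  have := LinearMap.finiteDimensional_ker_comp (s : H →ₗ[ℂ] H) (A : H →ₗ[ℂ] H)
  have := LinearMap.finiteDimensional_quotient_range_comp (s : H →ₗ[ℂ] H) (A : H →ₗ[ℂ] H)
  refine ⟨isFredholm_of_finiteDimensional ?_ ?_, ?_⟩
  · rw [hcomp]
    exact LinearMap.finiteDimensional_ker_comp _ _
  · rw [hcomp]
    exact LinearMap.finiteDimensional_quotient_range_comp _ _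
  rw [fredholmInd_eq_index, fredholmInd_eq_index, hcomp, LinearMap.index_comp,
    LinearMap.index_comp, index_adjoint_of_norm_map s hs]
  ring

end Fredholm

theorem lambda_toeplitz_index_rotation_invariance_general
    {X : Type*} [CommMonoid X] (P : Submonoid X)
    {H : Type*} [NormedAddCommGroup H] [InnerProductSpace ℂ H] [CompleteSpace H]
    (S : P → H →L[ℂ] H)
    (hiso : ∀ χ : P, ∀ x : H, ‖S χ x‖ = ‖x‖)
    (Q : Set P)
    (lam : P → ℂ) (hlam : ∀ χ ∈ Q, lam χ ≠ 0)
    (hSF : ∀ χ ∈ Q, IsFredholm (S χ))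
    (T : H →L[ℂ] H)
    (hint : ∀ χ ∈ Q, ContinuousLinearMap.adjoint (S χ) ∘L T ∘L S χ = lam χ • T)
    (μ : ℂ) (hμ : IsFredholm (T - μ • 1)) :
    ∀ χ ∈ Q, IsFredholm (T - ((lam χ)⁻¹ * μ) • 1) ∧
      fredholmInd (T - μ • 1) = fredholmInd (T - ((lam χ)⁻¹ * μ) • 1) := by
  intro χ hχ
  have hconj : ContinuousLinearMap.adjoint (S χ) ∘L (T - μ • 1) ∘L S χ =
      lam χ • (T - ((lam χ)⁻¹ * μ) • 1) := by
    have hus : ContinuousLinearMap.adjoint (S χ) * S χ = 1 :=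
      (ContinuousLinearMap.norm_map_iff_adjoint_comp_self _).1 (hiso χ)
    have huTs : ContinuousLinearMap.adjoint (S χ) * T * S χ = lam χ • T := by
      rw [mul_assoc]
      exact hint χ hχ
    have h := mul_sub_smul_one_mul_eq_smul (hlam χ hχ) hus huTs μ
    rwa [mul_assoc] at h
  have := hμ.adjoint_comp_comp_of_norm_map (hiso χ) (hSF χ hχ).2.2
  rwa [hconj, isFredholm_smul_iff (hlam χ hχ), fredholmInd_smul (hlam χ hχ), eq_comm] at this

/-- If the shift isometries `S_χ` (`χ` in a subset `Q` of the cone)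
are Fredholm, `λ(χ) ≠ 0` on `Q`, and `S_χ* T S_χ = λ(χ) T` on `Q`, then
Fredholmness of `T − μ` implies Fredholmness of `T − λ(χ)⁻¹μ` with the same index. -/
theorem lambda_toeplitz_index_rotation_invariance
    {X : Type*} [CommMonoid X] (P : Submonoid X)
    {H : Type*} [NormedAddCommGroup H] [InnerProductSpace ℂ H] [CompleteSpace H]
    (e : HilbertBasis P ℂ H)
    (S : P → H →L[ℂ] H)
    (hS : ∀ χ ξ : P, S χ (e ξ) = e (χ * ξ))
    (hiso : ∀ χ : P, ∀ x : H, ‖S χ x‖ = ‖x‖)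
    (Q : Set P)
    (lam : P → ℂ) (hlam : ∀ χ ∈ Q, lam χ ≠ 0)
    (hSF : ∀ χ ∈ Q, IsFredholm (S χ))
    (T : H →L[ℂ] H)
    (hint : ∀ χ ∈ Q, ContinuousLinearMap.adjoint (S χ) ∘L T ∘L S χ = lam χ • T)
    (μ : ℂ) (hμ : IsFredholm (T - μ • 1)) :
    ∀ χ ∈ Q, IsFredholm (T - ((lam χ)⁻¹ * μ) • 1) ∧
      fredholmInd (T - μ • 1) = fredholmInd (T - ((lam χ)⁻¹ * μ) • 1) :=
  lambda_toeplitz_index_rotation_invariance_general P S hiso Q lam hlam hSF T hint μ hμ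
end

section
/- Let T be a bounded operator on a Hilbert space H, S a Fredholm isometry on H, and c ∈ ℂ \ {0} such that S* T S = c T. Then the essential resolvent set ρ_e(T) = {μ : T − μ Fredholm} satisfies c⁻¹ ρ_e(T) ⊆ ρ_e(T); equivalently, c · σ_e(T) ⊆ σ_e(T) where σ_e is the essential (Fredholm) spectrum. -/
/-!
An isometry satisfies `S* S = 1`, so `S*` is a left inverse of the Fredholm operator `S` and hence
itself Fredholm. Then `S* (T - μ) S = c (T - c⁻¹ μ)` exhibits `T - c⁻¹ μ` as a nonzero multiple of
a product of Fredholm operators whenever `T - μ` is Fredholm. Products, nonzero multiples and left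
inverses are handled through quasi-inverses, i.e. inverses modulo finite-rank operators.
-/

open Topology LinearMap.FiniteRangeSetoid

namespace ContinuousLinearMap

section TopologicalVectorSpace

variable {𝕜 E F G : Type*} [NontriviallyNormedField 𝕜] [CompleteSpace 𝕜]
  [AddCommGroup E] [Module 𝕜 E] [TopologicalSpace E] [IsTopologicalAddGroup E]
  [ContinuousSMul 𝕜 E] [T2Space E]
  [AddCommGroup F] [Module 𝕜 F] [TopologicalSpace F] [IsTopologicalAddGroup F]
  [ContinuousSMul 𝕜 F] [T2Space F]
  [AddCommGroup G] [Module 𝕜 G] [TopologicalSpace G] [IsTopologicalAddGroup G]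
  [ContinuousSMul 𝕜 G] [T2Space G]

theorem IsFredholm.comp {u : E →L[𝕜] F} {v : F →L[𝕜] G} (hv : v.IsFredholm)
    (hu : u.IsFredholm) : (v ∘L u).IsFredholm := by
  obtain ⟨u', hu'⟩ := isFredholm_iff_exists_isQuasiInverse.mp hu
  obtain ⟨v', hv'⟩ := isFredholm_iff_exists_isQuasiInverse.mp hv
  exact .of_isQuasiInverse (v := u' ∘L v') (hu'.comp hv')

theorem IsFredholm.smul {u : E →L[𝕜] F} (hu : u.IsFredholm) {c : 𝕜} (hc : c ≠ 0) :
    (c • u).IsFredholm := by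
  obtain ⟨u', hu'⟩ := isFredholm_iff_exists_isQuasiInverse.mp hu
  have hl : (c⁻¹ • u') ∘L (c • u) = u' ∘L u := by
    rw [smul_comp, comp_smul, smul_smul, inv_mul_cancel₀ hc, one_smul]
  have hr : (c • u) ∘L (c⁻¹ • u') = u ∘L u' := by
    rw [smul_comp, comp_smul, smul_smul, mul_inv_cancel₀ hc, one_smul]
  refine .of_isQuasiInverse (v := c⁻¹ • u') ⟨?_, ?_⟩
  · change ((c⁻¹ • u') ∘L (c • u)).toLinearMap ≈ _
    rw [hl]; exact hu'.1
  · change ((c • u) ∘L (c⁻¹ • u')).toLinearMap ≈ _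
    rw [hr]; exact hu'.2

theorem isFredholm_smul_iff {u : E →L[𝕜] F} {c : 𝕜} (hc : c ≠ 0) :
    (c • u).IsFredholm ↔ u.IsFredholm :=
  ⟨fun h => by simpa [smul_smul, hc] using h.smul (inv_ne_zero hc), fun h => h.smul hc⟩

theorem IsFredholm.of_comp_eq_id {u : E →L[𝕜] F} {w : F →L[𝕜] E} (hu : u.IsFredholm)
    (hwu : w ∘L u = .id 𝕜 E) : w.IsFredholm := by
  obtain ⟨u', hu'⟩ := isFredholm_iff_exists_isQuasiInverse.mp hu
  -- `w ≈ w ∘ u ∘ u' = u'`, so the quasi-inverse `u'` of `u` may be replaced by `w`.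
  have hw : (w : F →ₗ[𝕜] E) ≈ u' := by
    have hcancel : (w : F →ₗ[𝕜] E) ∘ₗ ((u : E →ₗ[𝕜] F) ∘ₗ (u' : F →ₗ[𝕜] E)) = u' := by
      rw [← LinearMap.comp_assoc, ← toLinearMap_comp, hwu, coe_id, LinearMap.id_comp]
    exact hcancel ▸ Setoid.symm (equiv_comp_left hu'.2)
  exact .of_isQuasiInverse (v := u) (hu'.symm.congr (Setoid.refl _) hw)

end TopologicalVectorSpace

theorem isStrictMap_of_isClosed_range {𝕜 E F : Type*} [NontriviallyNormedField 𝕜]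
    [NormedAddCommGroup E] [NormedSpace 𝕜 E] [CompleteSpace E]
    [NormedAddCommGroup F] [NormedSpace 𝕜 F] [CompleteSpace F] (u : E →L[𝕜] F)
    (hu : IsClosed ((u : E →ₗ[𝕜] F).range : Set F)) : IsStrictMap u := by
  have := hu.completeSpace_coe
  rw [show (u : E → F) = (u : E →ₗ[𝕜] F) from rfl,
    LinearMap.isStrictMap_iff_isOpenQuotientMap_rangeRestrict]
  let r : E →L[𝕜] (u : E →ₗ[𝕜] F).range := u.rangeRestrict
  have hr : Function.Surjective r := LinearMap.surjective_rangeRestrict _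
  exact ⟨hr, r.continuous, r.isOpenMap hr⟩

end ContinuousLinearMap

/-- The extra conditions in `ContinuousLinearMap.IsFredholm` are automatic here: strictness by the
open mapping theorem, and a finite-dimensional kernel is complemented. -/
theorem isFredholm_iff_continuousLinearMap_isFredholm {H : Type*} [NormedAddCommGroup H]
    [InnerProductSpace ℂ H] [CompleteSpace H] (T : H →L[ℂ] H) : IsFredholm T ↔ T.IsFredholm :=
  ⟨fun ⟨hcl, hker, hcoker⟩ => ⟨T.isStrictMap_of_isClosed_range hcl, hcl, hker, hcoker,
    .of_finiteDimensional _⟩, fun h => ⟨h.isClosed_range, h.finite_ker, h.finite_coker⟩⟩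

/-- If `S` is a Fredholm isometry and `S* T S = c T` with `c ≠ 0`,
then `c⁻¹ ρ_e(T) ⊆ ρ_e(T)`, i.e. `c σ_e(T) ⊆ σ_e(T)`. -/
theorem essential_resolvent_rotation_invariance
    {H : Type*} [NormedAddCommGroup H] [InnerProductSpace ℂ H] [CompleteSpace H]
    (S T : H →L[ℂ] H)
    (hiso : ∀ x : H, ‖S x‖ = ‖x‖)
    (hSF : IsFredholm S)
    (c : ℂ) (hc : c ≠ 0)
    (hint : ContinuousLinearMap.adjoint S ∘L T ∘L S = c • T) :
    (∀ μ : ℂ, IsFredholm (T - μ • 1) → IsFredholm (T - (c⁻¹ * μ) • 1)) ∧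
      ∀ μ : ℂ, ¬ IsFredholm (T - μ • 1) → ¬ IsFredholm (T - (c * μ) • 1) := by
  have hSS : ContinuousLinearMap.adjoint S ∘L S = .id ℂ H :=
    S.norm_map_iff_adjoint_comp_self.mp hiso
  rw [isFredholm_iff_continuousLinearMap_isFredholm] at hSF
  have hSadj : (ContinuousLinearMap.adjoint S).IsFredholm := hSF.of_comp_eq_id hSS
  have key (μ : ℂ) (hμ : IsFredholm (T - μ • 1)) : IsFredholm (T - (c⁻¹ * μ) • 1) := by
    have hconj :
        ContinuousLinearMap.adjoint S ∘L (T - μ • 1) ∘L S = c • (T - (c⁻¹ * μ) • 1) := by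
      simp only [ContinuousLinearMap.sub_comp, ContinuousLinearMap.comp_sub, hint,
        ContinuousLinearMap.smul_comp, ContinuousLinearMap.comp_smul, ContinuousLinearMap.one_def,
        ContinuousLinearMap.id_comp, hSS, smul_sub, smul_smul, mul_inv_cancel_left₀ hc]
    rw [isFredholm_iff_continuousLinearMap_isFredholm] at hμ ⊢
    rw [← ContinuousLinearMap.isFredholm_smul_iff hc, ← hconj]
    exact hSadj.comp (hμ.comp hSF)
  refine ⟨key, fun μ hμ h => hμ ?_⟩
  simpa only [inv_mul_cancel_left₀ hc] using key (c * μ) h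
end

section
/- Let K ⊆ ℂ be a closed set and w ∈ 𝕋 an element of infinite order (w^n ≠ 1 for all n ≥ 1) such that w·K ⊆ K. Then K is circular: for every μ ∈ K and every ν ∈ ℂ with |ν| = |μ|, ν ∈ K. -/
/-!
Multiplication by `w` is an irrational rotation of the unit circle, so the powers `wⁿ`, `n ≥ 0`,
are dense in the circle. If `μ ∈ K` and `|ν| = |μ| ≠ 0`, then `ν / μ` is a limit of powers `wⁿ`,
hence `ν` is a limit of the points `wⁿ μ` of the orbit of `μ`, which lie in the closed set `K`.
-/

open Set

theorem IsClosed.mul_mem_of_mem_closure_range_pow {M : Type*} [Monoid M] [TopologicalSpace M]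
    [ContinuousMul M] {K : Set M} (hK : IsClosed K) {w : M} (hwK : ∀ z ∈ K, w * z ∈ K)
    {μ c : M} (hμ : μ ∈ K) (hc : c ∈ closure (range (w ^ · : ℕ → M))) : c * μ ∈ K := by
  have horbit : ∀ n : ℕ, w ^ n * μ ∈ K := by
    intro n
    induction n with
    | zero => simpa using hμ
    | succ n ih => simpa only [pow_succ', mul_assoc] using hwK _ ih
  rw [← hK.closure_eq]
  exact map_mem_closure (f := (· * μ)) (continuous_mul_const μ) hc
    (by rintro _ ⟨n, rfl⟩; exact horbit n)

theorem Circle.denseRange_zpow_of_orderOf_eq_zero {u : Circle} (hu : orderOf u = 0) :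
    DenseRange (u ^ · : ℤ → Circle) := by
  set e := AddCircle.homeomorphCircle (T := 1) one_ne_zero
  obtain ⟨a, rfl⟩ := e.surjective u
  have ha : addOrderOf a = 0 := addOrderOf_eq_zero_iff'.2 fun n hn hna =>
    orderOf_eq_zero_iff'.1 hu n hn <| by
      rw [AddCircle.homeomorphCircle_apply, ← AddCircle.toCircle_nsmul, hna,
        AddCircle.toCircle_zero]
  convert e.surjective.denseRange.comp (AddCircle.denseRange_zsmul_iff.2 ha) e.continuous
    using 2 with n
  simp [e, AddCircle.homeomorphCircle_apply, AddCircle.toCircle_zsmul]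

theorem Complex.sphere_subset_closure_range_pow {w : ℂ} (hw : ‖w‖ = 1) (hord : orderOf w = 0) :
    Metric.sphere 0 1 ⊆ closure (range (w ^ · : ℕ → ℂ)) := by
  intro z hz
  set u : Circle := ⟨w, mem_sphere_zero_iff_norm.2 hw⟩
  have hu : orderOf u = 0 := by
    rwa [← orderOf_injective Circle.coeHom Circle.coe_injective u]
  have hdense := denseRange_zpow_iff_pow.1 (Circle.denseRange_zpow_of_orderOf_eq_zero hu)
  exact map_mem_closure (x := (⟨z, hz⟩ : Circle)) continuous_subtype_val (hdense _)
    (by rintro _ ⟨n, rfl⟩; exact ⟨n, rfl⟩)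

/-- A closed subset of ℂ invariant under multiplication by a
unimodular number of infinite order is circular. -/
theorem closed_set_circular_of_irrational_rotation
    (K : Set ℂ) (hK : IsClosed K)
    (w : ℂ) (hw : ‖w‖ = 1)
    (hord : ∀ n : ℕ, 1 ≤ n → w ^ n ≠ 1)
    (hinv : ∀ z ∈ K, w * z ∈ K) :
    ∀ μ ∈ K, ∀ ν : ℂ, ‖ν‖ = ‖μ‖ → ν ∈ K := by
  intro μ hμ ν hν
  rcases eq_or_ne μ 0 with rfl | hμ0
  · rwa [norm_eq_zero.1 (hν.trans norm_zero)]
  have hνμ : ν / μ ∈ Metric.sphere 0 1 := by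
    rw [mem_sphere_zero_iff_norm, norm_div, hν, div_self (norm_ne_zero_iff.2 hμ0)]
  have hw_order : orderOf w = 0 := orderOf_eq_zero_iff'.2 hord
  rw [← div_mul_cancel₀ ν hμ0]
  exact hK.mul_mem_of_mem_closure_range_pow hinv hμ
    (Complex.sphere_subset_closure_range_pow hw hw_order hνμ)
end

section
/- Let T be a bounded operator on a Hilbert space, q ≥ 1, and w a primitive q-th root of unity such that σ_e(T) = w·σ_e(T) and, for all μ ∈ ρ_e(T), ind(T − wμ) = ind(T − μ). If μ ∈ ρ_e(T), then T^q − μ^q = ∏_{k=0}^{q−1} (T − w̄^k μ) is Fredholm and ind(T^q − μ^q) = q · ind(T − μ). -/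
/-- The essential (Fredholm) spectrum. -/
def essSpectrum {H : Type*} [NormedAddCommGroup H] [InnerProductSpace ℂ H]
    [CompleteSpace H] (T : H →L[ℂ] H) : Set ℂ :=
  {μ : ℂ | ¬ IsFredholm (T - μ • 1)}

open LinearMap Module Polynomial

namespace LinearMap

variable {K U V W : Type*} [Field K] [AddCommGroup U] [Module K U] [AddCommGroup V] [Module K V]
  [AddCommGroup W] [Module K W]

/-- Only meaningful when kernel and cokernel are finite-dimensional: `finrank` is `0` otherwise. -/
noncomputable def fredholmIndex (f : V →ₗ[K] W) : ℤ :=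
  finrank K (ker f) - finrank K (W ⧸ range f)

theorem fredholmIndex_id : (LinearMap.id : V →ₗ[K] V).fredholmIndex = 0 := by
  rw [fredholmIndex, ker_id, range_id, finrank_bot, finrank_zero_of_subsingleton, sub_self]

variable (f : V →ₗ[K] W) (g : U →ₗ[K] V)

instance finiteDimensional_ker_comp_s12 [FiniteDimensional K (ker f)] [FiniteDimensional K (ker g)] :
    FiniteDimensional K (ker (f ∘ₗ g)) := by
  rw [ker_comp]
  refine rank_lt_aleph0_iff.mp <| Cardinal.lift_lt_aleph0.mp <|
    (lift_rank_comap_le _).trans_lt (Cardinal.add_lt_aleph0 ?_ ?_) <;>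
    exact Cardinal.lift_lt_aleph0.mpr (rank_lt_aleph0 _ _)

instance finiteDimensional_coker_comp [FiniteDimensional K (W ⧸ range f)]
    [FiniteDimensional K (V ⧸ range g)] : FiniteDimensional K (W ⧸ range (f ∘ₗ g)) := by
  rw [range_comp]
  refine rank_lt_aleph0_iff.mp <| Cardinal.lift_lt_aleph0.mp <|
    (lift_rank_quot_map_le _).trans_lt (Cardinal.add_lt_aleph0 ?_ ?_) <;>
    exact Cardinal.lift_lt_aleph0.mpr (rank_lt_aleph0 _ _)

theorem finrank_ker_comp [FiniteDimensional K (ker f)] [FiniteDimensional K (ker g)] :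
    finrank K (ker (f ∘ₗ g)) = finrank K (ker g) + finrank K (range g ⊓ ker f : Submodule K V) := by
  let φ := g.domRestrict (ker (f ∘ₗ g))
  have hker : ker φ ≃ₗ[K] ker g := by
    rw [ker_domRestrict]
    exact Submodule.comapSubtypeEquivOfLe (ker_le_ker_comp g f)
  have hrange : range φ = range g ⊓ ker f := by
    rw [range_domRestrict, ker_comp, Submodule.map_comap_eq]
  rw [← φ.finrank_range_add_finrank_ker, hrange, hker.finrank_eq, add_comm]

/-- Dimension count along the exact sequence
`ker f → V ⧸ range g → W ⧸ range (f ∘ₗ g) → W ⧸ range f → 0`. -/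
theorem finrank_coker_comp_add_finrank_ker [FiniteDimensional K (ker f)]
    [FiniteDimensional K (W ⧸ range f)] [FiniteDimensional K (V ⧸ range g)] :
    finrank K (W ⧸ range (f ∘ₗ g)) + finrank K (ker f) =
      finrank K (W ⧸ range f) + finrank K (V ⧸ range g) +
        finrank K (range g ⊓ ker f : Submodule K V) := by
  let θ := (range g).mkQ ∘ₗ (ker f).subtype
  let ψ := (range g).mapQ (range (f ∘ₗ g)) f (by rw [range_comp]; exact Submodule.le_comap_map _ _)
  have hθ : ker θ ≃ₗ[K] (range g ⊓ ker f : Submodule K V) := by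
    rw [ker_comp, Submodule.ker_mkQ, inf_comm, ← Submodule.map_comap_subtype]
    exact Submodule.equivSubtypeMap _ _
  have hψ : ker ψ = range θ := by
    rw [Submodule.ker_mapQ, range_comp, range_comp, Submodule.comap_map_eq, Submodule.map_sup,
      Submodule.range_subtype]
    simp only [Submodule.mkQ_map_self, bot_le, sup_of_le_right]
  have hcoker : ((W ⧸ range (f ∘ₗ g)) ⧸ range ψ) ≃ₗ[K] W ⧸ range f := by
    rw [Submodule.range_mapQ]
    exact Submodule.quotientQuotientEquivQuotient _ _ (range_comp_le_range g f)
  have hW := Submodule.finrank_quotient_add_finrank (range ψ)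
  have hψ_rank := ψ.finrank_range_add_finrank_ker
  have hθ_rank := θ.finrank_range_add_finrank_ker
  rw [hcoker.finrank_eq] at hW
  rw [hψ] at hψ_rank
  rw [hθ.finrank_eq] at hθ_rank
  omega

theorem fredholmIndex_comp [FiniteDimensional K (ker f)] [FiniteDimensional K (W ⧸ range f)]
    [FiniteDimensional K (ker g)] [FiniteDimensional K (V ⧸ range g)] :
    (f ∘ₗ g).fredholmIndex = f.fredholmIndex + g.fredholmIndex := by
  have hker := finrank_ker_comp f g
  have hcoker := finrank_coker_comp_add_finrank_ker f g
  simp only [fredholmIndex]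
  omega

end LinearMap

/-- `(x, c) ↦ A x + c` from `E × C`, `C` a complement of `range A`, is onto, hence a quotient map
by the open mapping theorem, and `range A` is the image of the saturated closed set `E × {0}`. -/
theorem ContinuousLinearMap.isClosed_range_of_finiteDimensional_quotient_s12
    {𝕜 E F : Type*} [NontriviallyNormedField 𝕜] [CompleteSpace 𝕜]
    [NormedAddCommGroup E] [NormedSpace 𝕜 E] [CompleteSpace E]
    [NormedAddCommGroup F] [NormedSpace 𝕜 F] [CompleteSpace F]
    (A : E →L[𝕜] F) [FiniteDimensional 𝕜 (F ⧸ range (A : E →ₗ[𝕜] F))] :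
    IsClosed (range (A : E →ₗ[𝕜] F) : Set F) := by
  obtain ⟨C, hC⟩ := (range (A : E →ₗ[𝕜] F)).exists_isCompl
  have : FiniteDimensional 𝕜 C := (Submodule.quotientEquivOfIsCompl _ _ hC).finiteDimensional
  have : CompleteSpace C := FiniteDimensional.complete 𝕜 C
  let B : E × C →L[𝕜] F := A.coprod C.subtypeL
  have hB : Function.Surjective B := by
    intro y
    obtain ⟨_, ⟨x, rfl⟩, c, hc, rfl⟩ :=
      Submodule.mem_sup.mp (hC.sup_eq_top ▸ Submodule.mem_top (x := y))
    exact ⟨(x, ⟨c, hc⟩), rfl⟩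
  have hpre : B ⁻¹' range (A : E →ₗ[𝕜] F) = Prod.snd ⁻¹' {0} := by
    ext ⟨x, c⟩
    change (A : E →ₗ[𝕜] F) x + (c : F) ∈ range (A : E →ₗ[𝕜] F) ↔ c = 0
    rw [Submodule.add_mem_iff_right _ (mem_range_self (A : E →ₗ[𝕜] F) x)]
    exact ⟨fun h => Subtype.ext (Submodule.disjoint_def.mp hC.disjoint _ h c.2),
      fun h => h ▸ zero_mem _⟩
  rw [← ((B.isOpenMap hB).isQuotientMap B.continuous hB).isClosed_preimage, hpre]
  exact isClosed_singleton.preimage continuous_snd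

theorem IsPrimitiveRoot.pow_sub_pow_smul_one_eq_prod {R A : Type*} [CommRing R] [IsDomain R]
    [Ring A] [Algebra R A] {ζ : R} {q : ℕ} (hζ : IsPrimitiveRoot ζ q) (hq : 0 < q) (a : A)
    (μ : R) : a ^ q - μ ^ q • 1 = ((List.range q).map fun k => a - (ζ ^ k * μ) • 1).prod := by
  have h := congrArg (aeval a) (X_pow_sub_C_eq_prod hζ hq (rfl : μ ^ q = μ ^ q))
  rw [Finset.prod_eq_multiset_prod, Finset.range_val, ← Multiset.coe_range, Multiset.map_coe,
    Multiset.prod_coe, map_list_prod, List.map_map] at h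
  simpa only [map_sub, aeval_X_pow, aeval_X, aeval_C, Function.comp_def,
    Algebra.algebraMap_eq_smul_one] using h

section Fredholm

variable {H : Type*} [NormedAddCommGroup H] [InnerProductSpace ℂ H] [CompleteSpace H]

theorem isFredholm_one : IsFredholm (1 : H →L[ℂ] H) := by
  rw [IsFredholm, ContinuousLinearMap.toLinearMap_one, End.one_eq_id, ker_id, range_id]
  exact ⟨by simp, inferInstance, inferInstance⟩

theorem fredholmInd_one : fredholmInd (1 : H →L[ℂ] H) = 0 := by
  rw [fredholmInd, ContinuousLinearMap.toLinearMap_one, End.one_eq_id]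
  exact fredholmIndex_id

theorem IsFredholm.mul {S T : H →L[ℂ] H} (hS : IsFredholm S) (hT : IsFredholm T) :
    IsFredholm (S * T) := by
  obtain ⟨-, _, _⟩ := hS
  obtain ⟨-, _, _⟩ := hT
  have : FiniteDimensional ℂ (H ⧸ range ((S * T : H →L[ℂ] H) : H →ₗ[ℂ] H)) :=
    inferInstanceAs (FiniteDimensional ℂ (H ⧸ range ((S : H →ₗ[ℂ] H) ∘ₗ (T : H →ₗ[ℂ] H))))
  exact ⟨(S * T).isClosed_range_of_finiteDimensional_quotient_s12,
    inferInstanceAs (FiniteDimensional ℂ (ker ((S : H →ₗ[ℂ] H) ∘ₗ (T : H →ₗ[ℂ] H)))), this⟩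

theorem fredholmInd_mul {S T : H →L[ℂ] H} (hS : IsFredholm S) (hT : IsFredholm T) :
    fredholmInd (S * T) = fredholmInd S + fredholmInd T := by
  obtain ⟨-, _, _⟩ := hS
  obtain ⟨-, _, _⟩ := hT
  exact fredholmIndex_comp (S : H →ₗ[ℂ] H) (T : H →ₗ[ℂ] H)

theorem IsFredholm.list_prod {l : List (H →L[ℂ] H)} (hl : ∀ A ∈ l, IsFredholm A) :
    IsFredholm l.prod :=
  List.prod_induction _ (fun _ _ => IsFredholm.mul) isFredholm_one hl

theorem fredholmInd_list_prod {l : List (H →L[ℂ] H)} (hl : ∀ A ∈ l, IsFredholm A) :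
    fredholmInd l.prod = (l.map fredholmInd).sum := by
  induction l with
  | nil => exact fredholmInd_one
  | cons A l ih =>
    rw [List.forall_mem_cons] at hl
    rw [List.prod_cons, fredholmInd_mul hl.1 (IsFredholm.list_prod hl.2), ih hl.2, List.map_cons,
      List.sum_cons]

variable {T : H →L[ℂ] H} {w μ : ℂ}

theorem mul_notMem_essSpectrum (hw : w ≠ 0)
    (hσ : essSpectrum T = (fun z : ℂ => w * z) '' essSpectrum T) (hμ : μ ∉ essSpectrum T) :
    w * μ ∉ essSpectrum T := by
  rw [hσ]
  rintro ⟨z, hz, hzμ⟩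
  exact hμ (mul_left_cancel₀ hw hzμ ▸ hz)

theorem pow_mul_notMem_essSpectrum (hw : w ≠ 0)
    (hσ : essSpectrum T = (fun z : ℂ => w * z) '' essSpectrum T) (hμ : μ ∉ essSpectrum T)
    (m : ℕ) : w ^ m * μ ∉ essSpectrum T := by
  induction m with
  | zero => simpa using hμ
  | succ m ih => simpa only [pow_succ', mul_assoc] using mul_notMem_essSpectrum hw hσ ih

theorem fredholmInd_sub_pow_mul_smul_one (hw : w ≠ 0)
    (hσ : essSpectrum T = (fun z : ℂ => w * z) '' essSpectrum T)
    (hind : ∀ μ : ℂ, μ ∉ essSpectrum T →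
      fredholmInd (T - (w * μ) • 1) = fredholmInd (T - μ • 1))
    (hμ : μ ∉ essSpectrum T) (m : ℕ) :
    fredholmInd (T - (w ^ m * μ) • 1) = fredholmInd (T - μ • 1) := by
  induction m with
  | zero => rw [pow_zero, one_mul]
  | succ m ih =>
    rw [pow_succ', mul_assoc, hind _ (pow_mul_notMem_essSpectrum hw hσ hμ m), ih]

end Fredholm

/-- If `σ_e(T)` is invariant under multiplication by a primitive
`q`-th root of unity `w` with matching indices on the essential resolvent, then
for `μ ∈ ρ_e(T)` the operator `T^q − μ^q` is Fredholm with index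
`q · ind(T − μ)`. -/
theorem index_of_power_of_lambda_toeplitz
    {H : Type*} [NormedAddCommGroup H] [InnerProductSpace ℂ H] [CompleteSpace H]
    (T : H →L[ℂ] H)
    (q : ℕ) (hq : 1 ≤ q) (w : ℂ) (hwq : w ^ q = 1)
    (hprim : ∀ n : ℕ, 0 < n → n < q → w ^ n ≠ 1)
    (hσ : essSpectrum T = (fun z : ℂ => w * z) '' essSpectrum T)
    (hind : ∀ μ : ℂ, μ ∉ essSpectrum T →
      fredholmInd (T - (w * μ) • 1) = fredholmInd (T - μ • 1))
    (μ : ℂ) (hμ : μ ∉ essSpectrum T) :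
    T ^ q - μ ^ q • 1 = ((List.range q).map (fun k => T - ((starRingEnd ℂ) w ^ k * μ) • 1)).prod ∧
      IsFredholm (T ^ q - μ ^ q • 1) ∧
      fredholmInd (T ^ q - μ ^ q • 1) = q * fredholmInd (T - μ • 1) := by
  have : NeZero q := NeZero.of_pos hq
  have hw : IsPrimitiveRoot w q := .mk_of_lt w hq hwq hprim
  have hw₀ : w ≠ 0 := hw.ne_zero (NeZero.ne q)
  have hwc : IsPrimitiveRoot ((starRingEnd ℂ) w) q := hw.map_of_injective (starRingEnd ℂ).injective
  obtain ⟨i, -, hi⟩ := hw.eq_pow_of_pow_eq_one hwc.pow_eq_one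
  have hfactor (k : ℕ) : (starRingEnd ℂ) w ^ k * μ = w ^ (i * k) * μ := by rw [pow_mul, hi]
  have hfred : ∀ A ∈ (List.range q).map (fun k => T - ((starRingEnd ℂ) w ^ k * μ) • 1),
      IsFredholm A := by
    simp only [List.mem_map, List.mem_range]
    rintro _ ⟨k, -, rfl⟩
    exact not_not.mp (hfactor k ▸ pow_mul_notMem_essSpectrum hw₀ hσ hμ _)
  have hprod := hwc.pow_sub_pow_smul_one_eq_prod hq T μ
  refine ⟨hprod, hprod ▸ IsFredholm.list_prod hfred, ?_⟩
  rw [hprod, fredholmInd_list_prod hfred, List.map_map]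
  simp only [Function.comp_def, hfactor, fredholmInd_sub_pow_mul_smul_one hw₀ hσ hind hμ,
    List.map_const', List.length_range, List.sum_replicate, nsmul_eq_mul]
end

section
/- Let T be a bounded operator on a Hilbert space with T^q = B for some bounded operator B, and suppose w is a primitive q-th root of unity with w·σ_e(T) = σ_e(T). Then σ_e(T) = {μ ∈ ℂ : μ^q ∈ σ_e(B)}. -/
/-!
Over `ℂ`, `X ^ q - μ ^ q = ∏ k < q, (X - w ^ k μ)`, so `B - μ ^ q = ∏ k < q, (T - w ^ k μ)` is a
product of commuting operators. Such a product has finite-dimensional kernel and cokernel iff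
every factor does, and for bounded operators between Banach spaces a finite-codimensional range is
automatically closed. Hence `μ ^ q ∈ σₑ(B)` iff `w ^ k μ ∈ σₑ(T)` for some `k < q`, and the
invariance of `σₑ(T)` under multiplication by `w` makes this equivalent to `μ ∈ σₑ(T)`.
-/

open LinearMap Submodule

namespace LinearMap

variable {K U V W : Type*} [DivisionRing K] [AddCommGroup U] [Module K U] [AddCommGroup V]
  [Module K V] [AddCommGroup W] [Module K W]

structure IsAlgFredholm (f : V →ₗ[K] W) : Prop where
  finiteDimensional_ker : FiniteDimensional K (ker f)
  cofg_range : (range f).CoFG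

theorem isAlgFredholm_id : (id : V →ₗ[K] V).IsAlgFredholm where
  finiteDimensional_ker := by rw [ker_id]; infer_instance
  cofg_range := by rw [range_id]; exact CoFG.top

theorem finiteDimensional_ker_comp_s13 (f : W →ₗ[K] U) (g : V →ₗ[K] W)
    [FiniteDimensional K (ker f)] [FiniteDimensional K (ker g)] :
    FiniteDimensional K (ker (f ∘ₗ g)) := by
  have hmap : FiniteDimensional K (map g (ker (f ∘ₗ g))) :=
    Submodule.finiteDimensional_of_le (by rw [ker_comp])
  refine .of_fg (fg_of_fg_map_of_fg_inf_ker g (Module.Finite.iff_fg.mp hmap) ?_)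
  rw [inf_eq_right.mpr (ker_le_ker_comp g f)]
  exact Module.Finite.iff_fg.mp ‹_›

-- If `G`, `G'` are complements of `range g`, `range f`, then `f G ⊔ G'` supplements `range (f ∘ g)`.
theorem cofg_range_comp (f : W →ₗ[K] U) (g : V →ₗ[K] W) (hf : (range f).CoFG)
    (hg : (range g).CoFG) : (range (f ∘ₗ g)).CoFG := by
  obtain ⟨G, hG⟩ := (range g).exists_isCompl
  obtain ⟨G', hG'⟩ := (range f).exists_isCompl
  refine FG.cofg_of_codisjoint (S := G.map f ⊔ G') ?_
    (((hg.fg_of_isCompl hG).map f).sup (hf.fg_of_isCompl hG'))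
  rw [codisjoint_iff, range_comp, sup_comm, ← sup_assoc, ← Submodule.map_sup, hG.sup_eq_top,
    Submodule.map_top, hG'.sup_eq_top]

theorem IsAlgFredholm.comp {f : W →ₗ[K] U} {g : V →ₗ[K] W} (hf : f.IsAlgFredholm)
    (hg : g.IsAlgFredholm) : (f ∘ₗ g).IsAlgFredholm where
  finiteDimensional_ker :=
    have := hf.finiteDimensional_ker
    have := hg.finiteDimensional_ker
    finiteDimensional_ker_comp_s13 f g
  cofg_range := cofg_range_comp f g hf.cofg_range hg.cofg_range

theorem IsAlgFredholm.of_mul_of_commute {f g : Module.End K V} (h : (f * g).IsAlgFredholm)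
    (hfg : Commute f g) : f.IsAlgFredholm where
  finiteDimensional_ker :=
    have := h.finiteDimensional_ker
    have hle : ker f ≤ ker (f * g) := by rw [hfg.eq]; exact ker_le_ker_comp f g
    Submodule.finiteDimensional_of_le hle
  cofg_range := h.cofg_range.of_le (range_comp_le_range g f)

theorem isAlgFredholm_mul_iff {f g : Module.End K V} (hfg : Commute f g) :
    (f * g).IsAlgFredholm ↔ f.IsAlgFredholm ∧ g.IsAlgFredholm :=
  ⟨fun h => ⟨h.of_mul_of_commute hfg, (hfg.eq ▸ h).of_mul_of_commute hfg.symm⟩,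
    fun h => h.1.comp h.2⟩

theorem isAlgFredholm_map_prod_iff {M ι : Type*} [CommMonoid M] (φ : M →* Module.End K V)
    (s : Finset ι) (p : ι → M) :
    (φ (∏ i ∈ s, p i)).IsAlgFredholm ↔ ∀ i ∈ s, (φ (p i)).IsAlgFredholm := by
  classical
  induction s using Finset.induction_on with
  | empty => simpa [Module.End.one_eq_id] using isAlgFredholm_id
  | insert i s hi ih =>
    rw [Finset.prod_insert hi, map_mul, isAlgFredholm_mul_iff ((Commute.all _ _).map φ), ih,
      Finset.forall_mem_insert]

end LinearMap

-- `T` induces an injection of the Banach space `E ⧸ ker T` with the same range, which has a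
-- finite-dimensional, hence closed, complement.
theorem ContinuousLinearMap.isClosed_range_of_cofg {𝕜 E F : Type*}
    [NontriviallyNormedField 𝕜] [CompleteSpace 𝕜] [NormedAddCommGroup E] [NormedSpace 𝕜 E]
    [CompleteSpace E] [NormedAddCommGroup F] [NormedSpace 𝕜 F] [CompleteSpace F]
    (T : E →L[𝕜] F) (hT : T.range.CoFG) : IsClosed (T.range : Set F) := by
  have : IsClosed (T.ker : Set E) := T.isClosed_ker
  obtain ⟨G, hG⟩ := T.range.exists_isCompl
  have : FiniteDimensional 𝕜 G := .of_fg (hT.fg_of_isCompl hG)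
  let T' := T.ker.liftQL T le_rfl
  have hrange : T'.range = T.range := range_liftQ _ _ _
  rw [← hrange]
  exact T'.closed_complemented_range_of_isCompl_of_ker_eq_bot G (hrange ▸ hG)
    G.closed_of_finiteDimensional (ker_liftQ_eq_bot _ _ _ le_rfl)

open Polynomial

section essSpectrum

variable {H : Type*} [NormedAddCommGroup H] [InnerProductSpace ℂ H] [CompleteSpace H]

theorem isFredholm_iff_isAlgFredholm (T : H →L[ℂ] H) :
    IsFredholm T ↔ (T : H →ₗ[ℂ] H).IsAlgFredholm :=
  ⟨fun ⟨_, hker, hcoker⟩ => ⟨hker, hcoker⟩,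
    fun ⟨hker, hcoker⟩ => ⟨T.isClosed_range_of_cofg hcoker, hker, hcoker⟩⟩

theorem pow_mem_essSpectrum_pow_iff (T : H →L[ℂ] H) {q : ℕ} (hq : 0 < q) {w : ℂ}
    (hw : IsPrimitiveRoot w q) (μ : ℂ) :
    μ ^ q ∈ essSpectrum (T ^ q) ↔ ∃ k < q, w ^ k * μ ∈ essSpectrum T := by
  let φ : ℂ[X] →* Module.End ℂ H :=
    (ContinuousLinearMap.toLinearMapRingHom.comp (aeval T).toRingHom).toMonoidHom
  have hφ (c : ℂ) : φ (X - C c) = ((T - c • 1 : H →L[ℂ] H) : H →ₗ[ℂ] H) := by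
    simp [φ, Algebra.algebraMap_eq_smul_one]
  have hfactor : ((T ^ q - μ ^ q • 1 : H →L[ℂ] H) : H →ₗ[ℂ] H)
      = φ (∏ k ∈ Finset.range q, (X - C (w ^ k * μ))) := by
    rw [← X_pow_sub_C_eq_prod hw hq rfl]
    simp [φ, Algebra.algebraMap_eq_smul_one, _root_.smul_pow]
  simp only [essSpectrum, Set.mem_ofPred_eq, isFredholm_iff_isAlgFredholm, hfactor,
    isAlgFredholm_map_prod_iff, hφ, Finset.mem_range, not_forall, exists_prop]

end essSpectrum

/-- If `T^q = B` and `σ_e(T)` is invariant under a primitive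
`q`-th root of unity, then `σ_e(T) = {μ : μ^q ∈ σ_e(B)}`. -/
theorem essSpectrum_of_power_root_of_unity_invariant
    {H : Type*} [NormedAddCommGroup H] [InnerProductSpace ℂ H] [CompleteSpace H]
    (T B : H →L[ℂ] H) (q : ℕ) (hq : 1 ≤ q) (hB : T ^ q = B)
    (w : ℂ) (hwq : w ^ q = 1)
    (hprim : ∀ n : ℕ, 0 < n → n < q → w ^ n ≠ 1)
    (hσ : (fun z : ℂ => w * z) '' essSpectrum T = essSpectrum T) :
    essSpectrum T = {μ : ℂ | μ ^ q ∈ essSpectrum B} := by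
  have hw : IsPrimitiveRoot w q := .mk_of_lt w hq hwq hprim
  have hmaps : Set.MapsTo (w * ·) (essSpectrum T) (essSpectrum T) :=
    fun z hz => hσ ▸ ⟨z, hz, rfl⟩
  ext μ
  rw [Set.mem_ofPred_eq, ← hB, pow_mem_essSpectrum_pow_iff T hq hw]
  refine ⟨fun hμ => ⟨0, hq, by rwa [pow_zero, one_mul]⟩, ?_⟩
  rintro ⟨k, hk, hkμ⟩
  have hμ : w ^ (q - k) * (w ^ k * μ) = μ := by
    rw [← mul_assoc, ← pow_add, Nat.sub_add_cancel hk.le, hwq, one_mul]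
  simpa only [mul_left_iterate, hμ] using hmaps.iterate (q - k) hkμ
end

section
/- Let T be a bounded operator on a Hilbert space with T^q = B, and w a primitive q-th root of unity with w·σ(T) = σ(T). Then σ(T) = {μ ∈ ℂ : μ^q ∈ σ(B)}. -/
/-- If `T^q = B` and the spectrum of `T` is invariant under a
primitive `q`-th root of unity, then `σ(T) = {μ : μ^q ∈ σ(B)}`. -/
theorem spectrum_of_power_root_of_unity_invariant
    {H : Type*} [NormedAddCommGroup H] [NormedSpace ℂ H] [CompleteSpace H]
    (T B : H →L[ℂ] H) (q : ℕ) (hq : 1 ≤ q) (hB : T ^ q = B)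
    (w : ℂ) (hwq : w ^ q = 1)
    (hprim : ∀ n : ℕ, 0 < n → n < q → w ^ n ≠ 1)
    (hσ : (fun z : ℂ => w * z) '' spectrum ℂ T = spectrum ℂ T) :
    spectrum ℂ T = {μ : ℂ | μ ^ q ∈ spectrum ℂ B} := by
  rcases subsingleton_or_nontrivial H with hH | hH
  · have hsub : Subsingleton (H →L[ℂ] H) := inferInstance
    have h0 : ∀ (S : H →L[ℂ] H), spectrum ℂ S = ∅ := by
      intro S
      ext z
      simp only [Set.mem_empty_iff_false, iff_false]
      intro hz
      exact spectrum.notMem_iff.mpr (isUnit_of_subsingleton _) hz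
    rw [h0, h0]
    ext μ
    simp
  · have hprim' : IsPrimitiveRoot w q := by
      refine ⟨hwq, fun l hl => ?_⟩
      by_contra hndvd
      have hr : w ^ (l % q) = 1 := by
        have h2 : w ^ l = (w ^ q) ^ (l / q) * w ^ (l % q) := by
          rw [← pow_mul, ← pow_add, Nat.div_add_mod]
        rw [h2, hwq, one_pow, one_mul] at hl
        exact hl
      have hrpos : 0 < l % q := Nat.pos_of_ne_zero fun h => hndvd (Nat.dvd_of_mod_eq_zero h)
      exact hprim _ hrpos (Nat.mod_lt _ (Nat.lt_of_lt_of_le Nat.zero_lt_one hq)) hr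
    have hmap : spectrum ℂ B = (· ^ q) '' spectrum ℂ T := by
      rw [← hB]; exact spectrum.map_pow T q
    -- invariance iterated
    have hinv : ∀ (k : ℕ) (ν : ℂ), ν ∈ spectrum ℂ T → w ^ k * ν ∈ spectrum ℂ T := by
      intro k
      induction k with
      | zero => intro ν hν; simpa using hν
      | succ n ih =>
        intro ν hν
        have : w * (w ^ n * ν) ∈ spectrum ℂ T := by
          rw [← hσ]; exact ⟨w ^ n * ν, ih ν hν, rfl⟩
        rw [← mul_assoc, ← pow_succ'] at this
        exact this
    ext μ
    simp only [Set.mem_setOf_eq, hmap, Set.mem_image]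
    constructor
    · intro hμ; exact ⟨μ, hμ, rfl⟩
    · rintro ⟨ν, hν, hνμ⟩
      by_cases hν0 : ν = 0
      · have : μ = 0 := by
          have : μ ^ q = 0 := by rw [← hνμ, hν0, zero_pow (by omega)]
          exact pow_eq_zero_iff (by omega) |>.mp this
        rwa [this, ← hν0]
      · have hζ : (μ / ν) ^ q = 1 := by
          rw [div_pow, ← hνμ, div_self (pow_ne_zero _ hν0)]
        haveI : NeZero q := ⟨by omega⟩
        obtain ⟨i, _, hi⟩ := hprim'.eq_pow_of_pow_eq_one hζ
        have hμν : μ = w ^ i * ν := by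
          field_simp at hi
          exact hi.symm
        rw [hμν]
        exact hinv i ν hν
end
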